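/- arXiv:2303.07468 — 2 statements merged into one kernel-verified Lean document; each statement's English description precedes it below -/
import Mathlib

section
/- Let g : [0, c̄] → ℝ be differentiable with g(0) = 0, g'(c) ≥ 1, g convex on [0, c̄], c̄ > 0, and g(c̄) > c̄. Define the agent's best response to a linear contract with slope θ₁ ∈ [0,1] as c(θ₁) ∈ argmax_{c∈[0,c̄]} (θ₁ g(c) − c), with ties broken in favor of the principal, and the principal's payoff as P(θ₁) = (1 − θ₁) g(c(θ₁)). Then max_{θ₁∈[0,1]} P(θ₁) = g(c̄) − c̄, attained at θ₁* = c̄ / g(c̄). -/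
open Set

/-!
Since `g' ≥ 1`, the surplus `g c - c` is largest at `c̄`. Participation (`c = 0` is available
to the agent) gives `c ≤ θ₁ g c` at the best response, so the principal's payoff
`(1 - θ₁) g c = g c - θ₁ g c` never exceeds the surplus `g c - c ≤ g c̄ - c̄`.
At `θ₁* = c̄ / g c̄` the agent's objective is convex and vanishes at both ends of `[0, c̄]`, so
it is `≤ 0` throughout; the agent is therefore indifferent between its best response and `c̄`,
and the tie-break lets the principal collect at least `(1 - θ₁*) g c̄ = g c̄ - c̄`.
-/

lemma sub_le_sub_of_one_le_deriv {g : ℝ → ℝ} {D : Set ℝ} (hD : Convex ℝ D)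
    (hderiv : ∀ x ∈ D, 1 ≤ deriv g x) {x y : ℝ} (hx : x ∈ D) (hy : y ∈ D) (hxy : x ≤ y) :
    y - x ≤ g y - g x := by
  -- `deriv` is `0` where `g` is not differentiable, so `1 ≤ deriv g x` forces differentiability.
  have hdiff : ∀ x ∈ D, DifferentiableAt ℝ g x := fun x hx =>
    differentiableAt_of_deriv_ne_zero (by linarith [hderiv x hx])
  have key := hD.mul_sub_le_image_sub_of_le_deriv
    (fun x hx => (hdiff x hx).continuousAt.continuousWithinAt)
    (fun x hx => (hdiff x (interior_subset hx)).differentiableWithinAt)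
    (fun x hx => hderiv x (interior_subset hx)) x hx y hy hxy
  rwa [one_mul] at key

lemma mul_le_self_of_convexOn_Icc {g : ℝ → ℝ} {cbar θ : ℝ} (hcbar : 0 ≤ cbar)
    (hconv : ConvexOn ℝ (Icc 0 cbar) g) (h0 : g 0 = 0) (hθ : 0 ≤ θ) (hθg : θ * g cbar ≤ cbar)
    {c : ℝ} (hc : c ∈ Icc 0 cbar) : θ * g c ≤ c := by
  have hobj : ConvexOn ℝ (Icc 0 cbar) (fun c => θ * g c - c) :=
    (hconv.smul hθ).sub (concaveOn_id (convex_Icc 0 cbar))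
  have hseg : c ∈ segment ℝ 0 cbar := by rwa [segment_eq_Icc hcbar]
  have key := hobj.le_on_segment (left_mem_Icc.mpr hcbar) (right_mem_Icc.mpr hcbar) hseg
  rw [h0, mul_zero, sub_zero, max_eq_left (sub_nonpos.mpr hθg)] at key
  linarith

lemma one_sub_mul_le_surplus_of_isMaxOn {g : ℝ → ℝ} {cbar θ c : ℝ} (hcbar : 0 ≤ cbar)
    (hderiv : ∀ x ∈ Icc 0 cbar, 1 ≤ deriv g x) (h0 : g 0 = 0) (hc : c ∈ Icc 0 cbar)
    (hbr : IsMaxOn (fun c => θ * g c - c) (Icc 0 cbar) c) :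
    (1 - θ) * g c ≤ g cbar - cbar := by
  have hparticipation : θ * g 0 - 0 ≤ θ * g c - c := hbr (left_mem_Icc.mpr hcbar)
  have hsurplus := sub_le_sub_of_one_le_deriv (convex_Icc 0 cbar) hderiv hc
    (right_mem_Icc.mpr hcbar) hc.2
  rw [h0] at hparticipation
  linarith

theorem linear_contract_optimal_convex_general (g : ℝ → ℝ) (cbar : ℝ) (hcbar : 0 < cbar)
    (h0 : g 0 = 0)
    (hderiv : ∀ c ∈ Icc (0:ℝ) cbar, 1 ≤ deriv g c)
    (hconv : ConvexOn ℝ (Icc (0:ℝ) cbar) g)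
    (hsurplus : cbar < g cbar)
    (cθ : ℝ → ℝ)
    (hmem : ∀ θ₁ ∈ Icc (0:ℝ) 1, cθ θ₁ ∈ Icc (0:ℝ) cbar)
    (hbr : ∀ θ₁ ∈ Icc (0:ℝ) 1, IsMaxOn (fun c => θ₁ * g c - c) (Icc (0:ℝ) cbar) (cθ θ₁))
    (htie : ∀ θ₁ ∈ Icc (0:ℝ) 1, ∀ c ∈ Icc (0:ℝ) cbar,
      θ₁ * g c - c = θ₁ * g (cθ θ₁) - cθ θ₁ → (1 - θ₁) * g c ≤ (1 - θ₁) * g (cθ θ₁)) :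
    IsMaxOn (fun θ₁ => (1 - θ₁) * g (cθ θ₁)) (Icc (0:ℝ) 1) (cbar / g cbar) ∧
      cbar / g cbar ∈ Icc (0:ℝ) 1 ∧
      (1 - cbar / g cbar) * g (cθ (cbar / g cbar)) = g cbar - cbar := by
  have hgc : 0 < g cbar := hcbar.trans hsurplus
  set θ := cbar / g cbar
  have hθ : θ ∈ Icc (0:ℝ) 1 := ⟨(div_pos hcbar hgc).le, (div_le_one hgc).mpr hsurplus.le⟩
  have hθg : θ * g cbar = cbar := div_mul_cancel₀ cbar hgc.ne'
  have hcbar_mem : cbar ∈ Icc (0:ℝ) cbar := right_mem_Icc.mpr hcbar.le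
  have hupper : ∀ θ₁ ∈ Icc (0:ℝ) 1, (1 - θ₁) * g (cθ θ₁) ≤ g cbar - cbar := fun θ₁ hθ₁ =>
    one_sub_mul_le_surplus_of_isMaxOn hcbar.le hderiv h0 (hmem θ₁ hθ₁) (hbr θ₁ hθ₁)
  have hindifferent : θ * g cbar - cbar = θ * g (cθ θ) - cθ θ := by
    have hnonpos := mul_le_self_of_convexOn_Icc hcbar.le hconv h0 hθ.1 hθg.le (hmem θ hθ)
    have hoptimal : θ * g cbar - cbar ≤ θ * g (cθ θ) - cθ θ := hbr θ hθ hcbar_mem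
    linarith
  have hattained : (1 - θ) * g (cθ θ) = g cbar - cbar := by
    refine le_antisymm (hupper θ hθ) ?_
    calc g cbar - cbar = (1 - θ) * g cbar := by rw [sub_mul, one_mul, hθg]
      _ ≤ (1 - θ) * g (cθ θ) := htie θ hθ cbar hcbar_mem hindifferent
  exact ⟨fun θ₁ hθ₁ => (hupper θ₁ hθ₁).trans hattained.ge, hθ, hattained⟩

/-- Optimal linear contract under a convex surplus function extracts the
maximal social surplus: with `cθ θ₁` the agent's best response to slope `θ₁`
(ties broken in favor of the principal), the principal payoff
`P θ₁ = (1 - θ₁) * g (cθ θ₁)` attains its maximum `g c̄ - c̄` over `θ₁ ∈ [0,1]`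
at `θ₁* = c̄ / g c̄`. -/
theorem linear_contract_optimal_convex (g : ℝ → ℝ) (cbar : ℝ) (hcbar : 0 < cbar)
    (hdiff : ∀ c ∈ Icc (0:ℝ) cbar, DifferentiableAt ℝ g c)
    (h0 : g 0 = 0)
    (hderiv : ∀ c ∈ Icc (0:ℝ) cbar, 1 ≤ deriv g c)
    (hconv : ConvexOn ℝ (Icc (0:ℝ) cbar) g)
    (hsurplus : cbar < g cbar)
    (cθ : ℝ → ℝ)
    (hmem : ∀ θ₁ ∈ Icc (0:ℝ) 1, cθ θ₁ ∈ Icc (0:ℝ) cbar)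
    (hbr : ∀ θ₁ ∈ Icc (0:ℝ) 1, IsMaxOn (fun c => θ₁ * g c - c) (Icc (0:ℝ) cbar) (cθ θ₁))
    (htie : ∀ θ₁ ∈ Icc (0:ℝ) 1, ∀ c ∈ Icc (0:ℝ) cbar,
      θ₁ * g c - c = θ₁ * g (cθ θ₁) - cθ θ₁ → (1 - θ₁) * g c ≤ (1 - θ₁) * g (cθ θ₁)) :
    IsMaxOn (fun θ₁ => (1 - θ₁) * g (cθ θ₁)) (Icc (0:ℝ) 1) (cbar / g cbar) ∧
      cbar / g cbar ∈ Icc (0:ℝ) 1 ∧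
      (1 - cbar / g cbar) * g (cθ (cbar / g cbar)) = g cbar - cbar :=
  linear_contract_optimal_convex_general g cbar hcbar h0 hderiv hconv hsurplus cθ hmem hbr htie
end

section
/- Fix h > 0, k > 0, a₀ ≥ 0 and t ∈ [0,1]. With g(c) = k(√(2c/h) + t a₀), we have sup_{c ≥ 0} (g(c) − c) = (1/2)(k²/h) + k t a₀, and the principal's payoff under the linear contract with slope p = 1/2, namely (1/4)(k²/h) + (1/2) k t a₀, is at least half of this supremum. -/
open Set

/-! The surplus `k √(2c/h) - c` becomes the concave quadratic `k s - h s² / 2` under the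
substitution `s = √(2c/h)`, which peaks at `s = k / h`, i.e. at `c* = k² / (2h)`, with value
`k² / (2h)`. The slope-`1/2` contract pays the principal exactly half of the maximal surplus. -/

lemma mul_sub_mul_sq_div_two_le {a : ℝ} (ha : 0 < a) (b s : ℝ) :
    b * s - a * s ^ 2 / 2 ≤ b ^ 2 / (2 * a) := by
  rw [le_div_iff₀ (by positivity)]
  nlinarith [sq_nonneg (a * s - b)]

lemma isGreatest_mul_sqrt_sub {h k : ℝ} (hh : 0 < h) (hk : 0 ≤ k) :
    IsGreatest ((fun c => k * Real.sqrt (2 * c / h) - c) '' Ici 0) (k ^ 2 / (2 * h)) := by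
  refine ⟨⟨k ^ 2 / (2 * h), by simp only [mem_Ici]; positivity, ?_⟩, ?_⟩
  · have sqrt_eq : Real.sqrt (2 * (k ^ 2 / (2 * h)) / h) = k / h := by
      rw [show 2 * (k ^ 2 / (2 * h)) / h = (k / h) ^ 2 by field_simp]
      exact Real.sqrt_sq (by positivity)
    simp only [sqrt_eq]
    field_simp
    ring
  · rintro _ ⟨c, hc, rfl⟩
    have sq_sqrt : Real.sqrt (2 * c / h) ^ 2 = 2 * c / h :=
      Real.sq_sqrt (div_nonneg (mul_nonneg zero_le_two (mem_Ici.mp hc)) hh.le)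
    calc k * Real.sqrt (2 * c / h) - c
        = k * Real.sqrt (2 * c / h) - h * Real.sqrt (2 * c / h) ^ 2 / 2 := by
          rw [sq_sqrt]; field_simp
      _ ≤ k ^ 2 / (2 * h) := mul_sub_mul_sq_div_two_le hh k _

theorem forest_conservation_half_optimal_general
    (h k a₀ t : ℝ) (hh : 0 < h) (hk : 0 < k) :
    IsGreatest ((fun c => k * (Real.sqrt (2 * c / h) + t * a₀) - c) '' Ici (0:ℝ))
        ((1/2) * (k^2 / h) + k * t * a₀) ∧
      (1/2) * ((1/2) * (k^2 / h) + k * t * a₀) ≤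
        (1/4) * (k^2 / h) + (1/2) * k * t * a₀ := by
  have surplus_eq : (fun c => k * (Real.sqrt (2 * c / h) + t * a₀) - c)
      = fun c => (k * Real.sqrt (2 * c / h) - c) + k * t * a₀ := by
    funext c; ring
  have shift_mono : Monotone (· + k * t * a₀) := fun _ _ hxy => add_le_add_left hxy _
  have shifted := shift_mono.map_isGreatest (isGreatest_mul_sqrt_sub hh hk.le)
  rw [image_image] at shifted
  refine ⟨?_, le_of_eq (by ring)⟩
  rw [surplus_eq, show (1/2) * (k^2 / h) = k ^ 2 / (2 * h) by ring]
  exact shifted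

/-- Forest conservation example, continued: with `g c = k (√(2c/h) + t a₀)`,
the maximal social surplus over `c ≥ 0` is `(1/2)(k²/h) + k t a₀`, and the
principal's payoff under the slope-`1/2` linear contract,
`(1/4)(k²/h) + (1/2) k t a₀`, is at least half of it. -/
theorem forest_conservation_half_optimal
    (h k a₀ t : ℝ) (hh : 0 < h) (hk : 0 < k) (ha₀ : 0 ≤ a₀)
    (ht : t ∈ Icc (0:ℝ) 1) :
    IsGreatest ((fun c => k * (Real.sqrt (2 * c / h) + t * a₀) - c) '' Ici (0:ℝ))
        ((1/2) * (k^2 / h) + k * t * a₀) ∧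
      (1/2) * ((1/2) * (k^2 / h) + k * t * a₀) ≤
        (1/4) * (k^2 / h) + (1/2) * k * t * a₀ :=
  forest_conservation_half_optimal_general h k a₀ t hh hk
end
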